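/- Let r ≥ 0 and let (ξ_n) and (η_n) be sequences in an S-metric space (X,S) such that S(ξ_n,ξ_n,η_n) → 0 as n → ∞. Then (ξ_n) is rough statistically convergent to ξ with roughness degree r if and only if (η_n) is rough statistically convergent to ξ with roughness degree r. -/

import Mathlib

open Filter

open scoped Classical in
/-- Natural density: `A ⊆ ℕ` has density `d` if `|{k ∈ A : k < n}|/n → d`. -/
def HasDensity (A : Set ℕ) (d : ℝ) : Prop :=
  Filter.Tendsto
    (fun n : ℕ => (((Finset.range n).filter (fun k => k ∈ A)).card : ℝ) / n)
    Filter.atTop (nhds d)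

/-- `S` is an S-metric on `X`. -/
structure IsSMetric {X : Type*} (S : X → X → X → ℝ) : Prop where
  nonneg : ∀ x y z, 0 ≤ S x y z
  eq_zero_iff : ∀ x y z, S x y z = 0 ↔ x = y ∧ y = z
  triangle : ∀ x y z a, S x y z ≤ S x x a + S y y a + S z z a

/-- Ordinary convergence of a sequence in an S-metric space. -/
def SConvergesTo {X : Type*} (S : X → X → X → ℝ) (x : ℕ → X) (l : X) : Prop :=
  ∀ ε : ℝ, 0 < ε → ∃ N : ℕ, ∀ n ≥ N, S (x n) (x n) l < ε

/-- Statistical convergence of a sequence in an S-metric space. -/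
def SStatConvergesTo {X : Type*} (S : X → X → X → ℝ) (x : ℕ → X) (l : X) : Prop :=
  ∀ ε : ℝ, 0 < ε → HasDensity {n : ℕ | ε ≤ S (x n) (x n) l} 0

/-- Cauchy sequence in an S-metric space. -/
def SCauchy {X : Type*} (S : X → X → X → ℝ) (x : ℕ → X) : Prop :=
  ∀ ε : ℝ, 0 < ε → ∃ k : ℕ, ∀ n ≥ k, ∀ m ≥ k, S (x n) (x n) (x m) < ε

/-- Statistically Cauchy sequence in an S-metric space. -/
def SStatCauchy {X : Type*} (S : X → X → X → ℝ) (x : ℕ → X) : Prop :=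
  ∀ ε : ℝ, 0 < ε → ∃ N : ℕ, HasDensity {n : ℕ | ε ≤ S (x n) (x n) (x N)} 0

/-- Statistically bounded sequence in an S-metric space. -/
def SStatBounded {X : Type*} (S : X → X → X → ℝ) (x : ℕ → X) : Prop :=
  ∀ u : X, ∃ B : ℝ, 0 < B ∧ HasDensity {n : ℕ | B ≤ S (x n) (x n) u} 0

/-- Rough convergence with roughness degree `r`. -/
def SRoughConvergesTo {X : Type*} (S : X → X → X → ℝ) (r : ℝ) (x : ℕ → X) (p : X) : Prop :=
  ∀ ε : ℝ, 0 < ε → ∃ k : ℕ, ∀ n ≥ k, S (x n) (x n) p < r + ε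

/-- Rough statistical convergence with roughness degree `r`. -/
def SRoughStatConvergesTo {X : Type*} (S : X → X → X → ℝ) (r : ℝ) (x : ℕ → X) (p : X) : Prop :=
  ∀ ε : ℝ, 0 < ε → HasDensity {n : ℕ | r + ε ≤ S (x n) (x n) p} 0

/-- The rough statistical limit set `st-LIM^r x_n`. -/
def stLIM {X : Type*} (S : X → X → X → ℝ) (r : ℝ) (x : ℕ → X) : Set X :=
  {p : X | SRoughStatConvergesTo S r x p}

/-- The topology on `X` generated by the open balls of the S-metric. -/
def sBallTopology {X : Type*} (S : X → X → X → ℝ) : TopologicalSpace X :=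
  TopologicalSpace.generateFrom
    {B : Set X | ∃ c : X, ∃ ε : ℝ, 0 < ε ∧ B = {y : X | S y y c < ε}}

/-! By the triangle inequality, `S(ηₙ,ηₙ,ξ) ≤ 2 S(ξₙ,ξₙ,ηₙ) + S(ξₙ,ξₙ,ξ)`, so the indices where `ηₙ`
is `r + ε`-far from `ξ` lie in the union of those where `ξₙ` is `r + ε/2`-far from `ξ`, a set of
density zero, and those where `S(ξₙ,ξₙ,ηₙ) ≥ ε/4`, a finite set. The converse follows by the
symmetry `S(x,x,y) = S(y,y,x)`. -/

namespace HasDensity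

open scoped Classical in
lemma mono_zero {A B : Set ℕ} (hAB : A ⊆ B) (hB : HasDensity B 0) : HasDensity A 0 :=
  squeeze_zero (fun _ => by positivity) (fun _ => by gcongr) hB

open scoped Classical in
lemma union_zero {A B : Set ℕ} (hA : HasDensity A 0) (hB : HasDensity B 0) :
    HasDensity (A ∪ B) 0 := by
  have hsum := hA.add hB
  rw [add_zero] at hsum
  refine squeeze_zero (fun n => by positivity) (fun n => ?_) hsum
  rw [← add_div]
  gcongr
  rw [← Nat.cast_add, Nat.cast_le]
  refine (Finset.card_le_card fun k hk => ?_).trans (Finset.card_union_le _ _)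
  simp only [Finset.mem_filter, Finset.mem_union, Set.mem_union] at hk ⊢
  tauto

open scoped Classical in
lemma zero_of_finite {A : Set ℕ} (hA : A.Finite) : HasDensity A 0 := by
  refine squeeze_zero (fun n => by positivity) (fun n => ?_)
    (tendsto_const_div_atTop_nhds_zero_nat (hA.toFinset.card : ℝ))
  gcongr
  exact fun k hk => hA.mem_toFinset.2 (Finset.mem_filter.1 hk).2

end HasDensity

lemma hasDensity_setOf_le_of_tendsto_zero {f : ℕ → ℝ} (hf : Tendsto f atTop (nhds 0))
    {ε : ℝ} (hε : 0 < ε) : HasDensity {n | ε ≤ f n} 0 := by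
  have hsmall : ∀ᶠ n in cofinite, f n < ε :=
    Nat.cofinite_eq_atTop ▸ hf.eventually (gt_mem_nhds hε)
  exact HasDensity.zero_of_finite (by simpa only [not_lt] using eventually_cofinite.1 hsmall)

namespace IsSMetric

variable {X : Type*} {S : X → X → X → ℝ}

lemma self_eq_zero (hS : IsSMetric S) (x : X) : S x x x = 0 :=
  (hS.eq_zero_iff x x x).2 ⟨rfl, rfl⟩

lemma symm (hS : IsSMetric S) (x y : X) : S x x y = S y y x := by
  have hxy := hS.triangle x x y x
  have hyx := hS.triangle y y x y
  rw [hS.self_eq_zero] at hxy hyx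
  linarith

lemma le_two_mul_add (hS : IsSMetric S) (x y p : X) : S y y p ≤ 2 * S x x y + S x x p := by
  have h := hS.triangle y y p x
  rw [hS.symm y x, hS.symm p x] at h
  linarith

end IsSMetric

lemma SRoughStatConvergesTo.of_tendsto_zero {X : Type*} {S : X → X → X → ℝ} (hS : IsSMetric S)
    {r : ℝ} {xs ys : ℕ → X} {p : X}
    (h : Tendsto (fun n => S (xs n) (xs n) (ys n)) atTop (nhds 0))
    (hx : SRoughStatConvergesTo S r xs p) : SRoughStatConvergesTo S r ys p := by
  intro ε hε
  refine HasDensity.mono_zero (fun n hn => ?_)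
    ((hasDensity_setOf_le_of_tendsto_zero h (by positivity : 0 < ε / 4)).union_zero
      (hx (ε / 2) (by positivity)))
  by_contra hc
  simp only [Set.mem_union, Set.mem_ofPred_eq, not_or, not_le] at hn hc
  linarith [hS.le_two_mul_add (xs n) (ys n) p]

theorem stmt_18_general {X : Type*} (S : X → X → X → ℝ) (hS : IsSMetric S)
    (r : ℝ) (ξs ηs : ℕ → X) (ξ : X)
    (h : Filter.Tendsto (fun n => S (ξs n) (ξs n) (ηs n)) Filter.atTop (nhds 0)) :
    SRoughStatConvergesTo S r ξs ξ ↔ SRoughStatConvergesTo S r ηs ξ :=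
  ⟨.of_tendsto_zero hS h, .of_tendsto_zero hS (h.congr fun _ => hS.symm _ _)⟩

theorem stmt_18 {X : Type*} [Nonempty X] (S : X → X → X → ℝ) (hS : IsSMetric S)
    (r : ℝ) (hr : 0 ≤ r) (ξs ηs : ℕ → X) (ξ : X)
    (h : Filter.Tendsto (fun n => S (ξs n) (ξs n) (ηs n)) Filter.atTop (nhds 0)) :
    SRoughStatConvergesTo S r ξs ξ ↔ SRoughStatConvergesTo S r ηs ξ :=
  stmt_18_general S hS r ξs ηs ξ h
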